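/- Let A₁,…,A_m be nonempty compact sets in ℝ and let (𝒢, β) be a nontrivial fractional partition of [m]. Suppose |∑_{i∈[m]} A_i| > 0 and equality |∑_{i∈[m]} A_i| = ∑_{S∈𝒢} β(S)·|∑_{i∈S} A_i| holds. Then every S ∈ 𝒢 with |∑_{i∈S} A_i| = 0 satisfies card(∑_{i∈S} A_i) = 1, i.e., the sum is a single point. -/
import Mathlib


open MeasureTheory Pointwise Set

/-- `(𝒢, β)` is a fractional partition of `[m]` with strictly positive weights. -/
def IsFractionalPartition (m : ℕ) (G : Finset (Finset (Fin m)))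
    (β : Finset (Fin m) → ℝ) : Prop :=
  (∀ S ∈ G, S.Nonempty) ∧ (∀ S ∈ G, 0 < β S ∧ β S ≤ 1) ∧
    ∀ i : Fin m, ∑ S ∈ G.filter (fun S => i ∈ S), β S = 1

namespace ZeroMeasureAux

variable {m : ℕ} {A : Fin m → Set ℝ}

private lemma sum_compact (hc : ∀ i, IsCompact (A i)) (S : Finset (Fin m)) :
    IsCompact (∑ i ∈ S, A i) := by
  classical
  induction S using Finset.cons_induction with
  | empty =>
      rw [Finset.sum_empty, ← Set.singleton_zero]
      exact isCompact_singleton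
  | cons i s hi ih =>
      rw [Finset.sum_cons]
      exact (hc i).add ih

private lemma sum_vol_ne_top (hc : ∀ i, IsCompact (A i)) (S : Finset (Fin m)) (B : Set ℝ) :
    volume ((∑ i ∈ S, A i) ∩ B) ≠ ⊤ :=
  ((measure_mono Set.inter_subset_left).trans_lt (sum_compact hc S).measure_lt_top).ne

/-- measure splitting of `T ∩ Iic b` at a point `a ≤ b`. -/
private lemma vol_split {T : Set ℝ} (hT : IsCompact T) {a b : ℝ} (hab : a ≤ b) :
    (volume (T ∩ Iic b)).toReal
      = (volume (T ∩ Iic a)).toReal + (volume (T ∩ Ioc a b)).toReal := by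
  have hsets : T ∩ Iic b = (T ∩ Iic a) ∪ (T ∩ Ioc a b) := by
    rw [← Set.inter_union_distrib_left, Set.Iic_union_Ioc_eq_Iic hab]
  have hdisj : Disjoint (T ∩ Iic a) (T ∩ Ioc a b) :=
    (Set.Iic_disjoint_Ioc le_rfl).mono Set.inter_subset_right Set.inter_subset_right
  have hmeas : MeasurableSet (T ∩ Ioc a b) :=
    hT.isClosed.measurableSet.inter measurableSet_Ioc
  have h1 : volume (T ∩ Iic a) ≠ ⊤ :=
    ((measure_mono Set.inter_subset_left).trans_lt hT.measure_lt_top).ne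
  have h2 : volume (T ∩ Ioc a b) ≠ ⊤ :=
    ((measure_mono Set.inter_subset_left).trans_lt hT.measure_lt_top).ne
  rw [hsets, measure_union hdisj hmeas, ENNReal.toReal_add h1 h2]

noncomputable def Phi (A : Fin m → Set ℝ) (S : Finset (Fin m)) (p : Fin m → ℝ) : ℝ :=
  (volume ((∑ i ∈ S, A i) ∩ Iic (∑ i ∈ S, p i))).toReal

noncomputable def win (A : Fin m → Set ℝ) (S : Finset (Fin m)) (p : Fin m → ℝ) (δ : ℝ) : ℝ :=
  (volume ((∑ j ∈ S, A j) ∩ Ioc (∑ j ∈ S, p j) ((∑ j ∈ S, p j) + δ))).toReal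

noncomputable def Psi (A : Fin m → Set ℝ) (G : Finset (Finset (Fin m)))
    (β : Finset (Fin m) → ℝ) (p : Fin m → ℝ) : ℝ :=
  Phi A Finset.univ p - ∑ S ∈ G, β S * Phi A S p

/-- the key shift inequality: a window of a subset-sum embeds into the
corresponding window of the full sum after translating by the positions of the
remaining coordinates. -/
private lemma key_shift (p : Fin m → ℝ) (hp : ∀ j, p j ∈ A j) (S : Finset (Fin m)) {c d : ℝ} :
    volume ((∑ i ∈ S, A i) ∩ Ioc c d) ≤
      volume ((∑ i, A i) ∩ Ioc (c + ∑ j ∈ Sᶜ, p j) (d + ∑ j ∈ Sᶜ, p j)) := by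
  classical
  set s : ℝ := ∑ j ∈ Sᶜ, p j with hs
  have hsub : ((∑ i ∈ S, A i) ∩ Ioc c d)
      ⊆ (fun y => s + y) ⁻¹' ((∑ i, A i) ∩ Ioc (c + s) (d + s)) := by
    rintro y ⟨hy1, hy2⟩
    obtain ⟨hlt, hle⟩ := Set.mem_Ioc.1 hy2
    have hmem : s ∈ ∑ j ∈ Sᶜ, A j :=
      Set.finset_sum_mem_finset_sum _ _ _ (fun j _ => hp j)
    have hfull : y + s ∈ ∑ i, A i := by
      have := Set.add_mem_add hy1 hmem
      rwa [Finset.sum_add_sum_compl] at this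
    show s + y ∈ (∑ i, A i) ∩ Ioc (c + s) (d + s)
    exact ⟨by rwa [add_comm s y], Set.mem_Ioc.2 ⟨by linarith, by linarith⟩⟩
  calc volume ((∑ i ∈ S, A i) ∩ Ioc c d)
      ≤ volume ((fun y => s + y) ⁻¹' ((∑ i, A i) ∩ Ioc (c + s) (d + s))) := measure_mono hsub
    _ = volume ((∑ i, A i) ∩ Ioc (c + s) (d + s)) := measure_preimage_add volume s _

private lemma phi_update (hc : ∀ i, IsCompact (A i)) (p : Fin m → ℝ) (i : Fin m) {b : ℝ}
    (hb : p i ≤ b) (S : Finset (Fin m)) :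
    Phi A S (Function.update p i b) = Phi A S p +
      (if i ∈ S then win A S p (b - p i) else 0) := by
  classical
  by_cases hi : i ∈ S
  · simp only [hi, if_true]
    have hσ : ∑ j ∈ S, Function.update p i b j = (∑ j ∈ S, p j) + (b - p i) := by
      rw [Finset.sum_update_of_mem hi, ← Finset.erase_eq]
      linarith [Finset.add_sum_erase S p hi]
    unfold Phi win
    rw [hσ, vol_split (sum_compact hc S) (by linarith)]
  · simp only [hi, if_false, add_zero]
    unfold Phi
    rw [Finset.sum_update_of_notMem hi]

private lemma win_le (hc : ∀ i, IsCompact (A i)) (p : Fin m → ℝ) (hp : ∀ j, p j ∈ A j)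
    (S : Finset (Fin m)) (δ : ℝ) :
    win A S p δ ≤ win A Finset.univ p δ := by
  unfold win
  have h := key_shift p hp S (c := ∑ j ∈ S, p j) (d := (∑ j ∈ S, p j) + δ)
  have hsplit : (∑ j ∈ S, p j) + ∑ j ∈ Sᶜ, p j = ∑ j, p j := Finset.sum_add_sum_compl S p
  rw [hsplit, show (∑ j ∈ S, p j) + δ + ∑ j ∈ Sᶜ, p j = (∑ j, p j) + δ from by linarith] at h
  exact ENNReal.toReal_mono (sum_vol_ne_top hc _ _) h

private lemma win_nonneg (S : Finset (Fin m)) (p : Fin m → ℝ) (δ : ℝ) : 0 ≤ win A S p δ :=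
  ENNReal.toReal_nonneg

private lemma win_zero_of_null {S : Finset (Fin m)} (hnull : volume (∑ j ∈ S, A j) = 0)
    (p : Fin m → ℝ) (δ : ℝ) : win A S p δ = 0 := by
  unfold win
  rw [measure_mono_null Set.inter_subset_left hnull, ENNReal.toReal_zero]

variable {G : Finset (Finset (Fin m))} {β : Finset (Fin m) → ℝ}

private lemma psi_move_eq (hc : ∀ i, IsCompact (A i))
    (hcov : ∀ i, ∑ S ∈ G.filter (fun S => i ∈ S), β S = 1)
    (p : Fin m → ℝ) (i : Fin m) {b : ℝ} (hb : p i ≤ b) :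
    Psi A G β (Function.update p i b) = Psi A G β p +
      ∑ S ∈ G.filter (fun S => i ∈ S),
        β S * (win A Finset.univ p (b - p i) - win A S p (b - p i)) := by
  classical
  unfold Psi
  rw [phi_update hc p i hb Finset.univ, if_pos (Finset.mem_univ i)]
  have h2 : ∀ S ∈ G, β S * Phi A S (Function.update p i b)
      = β S * Phi A S p + (if i ∈ S then β S * win A S p (b - p i) else 0) := by
    intro S _
    rw [phi_update hc p i hb S]
    by_cases hi : i ∈ S <;> simp [hi, mul_add]
  rw [Finset.sum_congr rfl h2, Finset.sum_add_distrib, ← Finset.sum_filter]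
  have h4 : ∑ S ∈ G.filter (fun S => i ∈ S),
        β S * (win A Finset.univ p (b - p i) - win A S p (b - p i))
      = win A Finset.univ p (b - p i)
        - ∑ S ∈ G.filter (fun S => i ∈ S), β S * win A S p (b - p i) := by
    simp only [mul_sub]
    rw [Finset.sum_sub_distrib, ← Finset.sum_mul, hcov i, one_mul]
  rw [h4]
  ring

private lemma psi_move (hc : ∀ i, IsCompact (A i)) (hβpos : ∀ S ∈ G, 0 ≤ β S)
    (hcov : ∀ i, ∑ S ∈ G.filter (fun S => i ∈ S), β S = 1)
    (p : Fin m → ℝ) (hp : ∀ j, p j ∈ A j) (i : Fin m) {b : ℝ} (hb : p i ≤ b) :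
    Psi A G β p ≤ Psi A G β (Function.update p i b) := by
  rw [psi_move_eq hc hcov p i hb]
  have h : 0 ≤ ∑ S ∈ G.filter (fun S => i ∈ S),
      β S * (win A Finset.univ p (b - p i) - win A S p (b - p i)) :=
    Finset.sum_nonneg fun S hS => mul_nonneg (hβpos S (Finset.mem_of_mem_filter S hS))
      (sub_nonneg.2 (win_le hc p hp S _))
  linarith

private lemma psi_move_strong (hc : ∀ i, IsCompact (A i)) (hβpos : ∀ S ∈ G, 0 ≤ β S)
    (hcov : ∀ i, ∑ S ∈ G.filter (fun S => i ∈ S), β S = 1)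
    (p : Fin m → ℝ) (hp : ∀ j, p j ∈ A j) (i : Fin m) {b : ℝ} (hb : p i ≤ b)
    {S₀ : Finset (Fin m)} (hS₀ : S₀ ∈ G) (hi₀ : i ∈ S₀)
    (hnull : volume (∑ j ∈ S₀, A j) = 0) :
    Psi A G β p + β S₀ * win A Finset.univ p (b - p i)
      ≤ Psi A G β (Function.update p i b) := by
  classical
  rw [psi_move_eq hc hcov p i hb]
  have hmem : S₀ ∈ G.filter (fun S => i ∈ S) := Finset.mem_filter.2 ⟨hS₀, hi₀⟩
  have hsingle : β S₀ * (win A Finset.univ p (b - p i) - win A S₀ p (b - p i))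
      ≤ ∑ S ∈ G.filter (fun S => i ∈ S),
          β S * (win A Finset.univ p (b - p i) - win A S p (b - p i)) :=
    Finset.single_le_sum (fun S hS => mul_nonneg (hβpos S (Finset.mem_of_mem_filter S hS))
      (sub_nonneg.2 (win_le hc p hp S _))) hmem
  rw [win_zero_of_null hnull p (b - p i)] at hsingle
  linarith

private lemma psi_interp (hc : ∀ i, IsCompact (A i)) (hβpos : ∀ S ∈ G, 0 ≤ β S)
    (hcov : ∀ i, ∑ S ∈ G.filter (fun S => i ∈ S), β S = 1)
    (y z : Fin m → ℝ) (hy : ∀ j, y j ∈ A j) (hz : ∀ j, z j ∈ A j) (hyz : ∀ j, y j ≤ z j) :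
    Psi A G β y ≤ Psi A G β z := by
  classical
  have key : ∀ k : ℕ, k ≤ m →
      Psi A G β y ≤ Psi A G β (fun j => if (j : ℕ) < k then z j else y j) := by
    intro k
    induction k with
    | zero => intro _; simp
    | succ k ih =>
      intro hk1
      have hk : k < m := hk1
      set i : Fin m := ⟨k, hk⟩ with hidef
      have hstate : (fun j : Fin m => if (j : ℕ) < k + 1 then z j else y j)
          = Function.update (fun j : Fin m => if (j : ℕ) < k then z j else y j) i (z i) := by
        funext j
        by_cases hj : j = i
        · subst hj
          simp [hidef]
        · rw [Function.update_of_ne hj]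
          have hne : (j : ℕ) ≠ k := fun h => hj (Fin.ext (by simp [hidef, h]))
          by_cases h2 : (j : ℕ) < k
          · simp [h2, Nat.lt_succ_of_lt h2]
          · have h3 : ¬ ((j : ℕ) < k + 1) := by omega
            simp [h2, h3]
      rw [hstate]
      refine le_trans (ih (le_of_lt hk)) (psi_move hc hβpos hcov _ ?_ i ?_)
      · intro j
        by_cases h : (j : ℕ) < k <;> simp [h, hy j, hz j]
      · have : ¬ ((i : ℕ) < k) := by simp [hidef]
        simp only [this, if_false]
        exact hyz i
  have hm := key m (le_refl m)
  have : (fun j : Fin m => if (j : ℕ) < m then z j else y j) = z := by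
    funext j; simp [j.isLt]
  rwa [this] at hm

private lemma phi_min (hc : ∀ i, IsCompact (A i)) (S : Finset (Fin m)) :
    Phi A S (fun i => sInf (A i)) = 0 := by
  unfold Phi
  have hsub : (∑ i ∈ S, A i) ∩ Iic (∑ i ∈ S, sInf (A i)) ⊆ {∑ i ∈ S, sInf (A i)} := by
    rintro t ⟨ht, ht2⟩
    obtain ⟨g, hg, rfl⟩ := (Set.mem_finset_sum S A _).1 ht
    have hle : ∑ i ∈ S, sInf (A i) ≤ ∑ i ∈ S, g i :=
      Finset.sum_le_sum fun i hi => csInf_le (hc i).bddBelow (hg hi)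
    have : ∑ i ∈ S, g i = ∑ i ∈ S, sInf (A i) := le_antisymm ht2 hle
    simp [this]
  rw [measure_mono_null hsub Real.volume_singleton, ENNReal.toReal_zero]

private lemma phi_max (hc : ∀ i, IsCompact (A i)) (S : Finset (Fin m)) :
    Phi A S (fun i => sSup (A i)) = (volume (∑ i ∈ S, A i)).toReal := by
  unfold Phi
  have hsub : (∑ i ∈ S, A i) ⊆ Iic (∑ i ∈ S, sSup (A i)) := by
    intro t ht
    obtain ⟨g, hg, rfl⟩ := (Set.mem_finset_sum S A _).1 ht
    exact Set.mem_Iic.2 (Finset.sum_le_sum fun i hi => le_csSup (hc i).bddAbove (hg hi))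
  rw [show (∑ i ∈ S, (fun i => sSup (A i)) i) = ∑ i ∈ S, sSup (A i) from rfl,
    Set.inter_eq_left.2 hsub]

private lemma countable_of_sep {E : Set ℝ} {l : ℝ} (hl : 0 < l)
    (hsep : ∀ c₁ ∈ E, ∀ c₂ ∈ E, c₁ < c₂ → c₁ + l ≤ c₂) : E.Countable := by
  have hsub : E ⊆ ⋃ n : ℤ, {c | c ∈ E ∧ ⌊c / l⌋ = n} :=
    fun c hc => Set.mem_iUnion.2 ⟨⌊c / l⌋, hc, rfl⟩
  refine Set.Countable.mono hsub (Set.countable_iUnion fun n => Set.Subsingleton.countable ?_)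
  rintro c₁ ⟨h1, hf1⟩ c₂ ⟨h2, hf2⟩
  have key : ∀ a ∈ E, ∀ b ∈ E, a < b → ⌊a / l⌋ < ⌊b / l⌋ := by
    intro a ha b hb hab
    have hd := hsep a ha b hb hab
    have hdiv : a / l + 1 ≤ b / l := by
      rw [show a / l + 1 = (a + l) / l by field_simp]
      gcongr
    have h2 : ⌊a / l⌋ + 1 ≤ ⌊b / l⌋ := by
      rw [← Int.floor_add_one]
      exact Int.floor_mono hdiv
    omega
  by_contra hne
  rcases lt_or_gt_of_ne hne with h | h
  · exact absurd (hf1.trans hf2.symm) (ne_of_lt (key _ h1 _ h2 h))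
  · exact absurd (hf2.trans hf1.symm) (ne_of_lt (key _ h2 _ h1 h))

private lemma sum_singleton_sets (S : Finset (Fin m)) (c : Fin m → ℝ)
    (h : ∀ i ∈ S, A i = {c i}) : ∑ i ∈ S, A i = {∑ i ∈ S, c i} := by
  rw [Finset.sum_congr rfl h]
  exact Set.finset_sum_singleton S c

end ZeroMeasureAux

open ZeroMeasureAux in
theorem zero_measure_summand_is_point (m : ℕ) (A : Fin m → Set ℝ)
    (hne : ∀ i, (A i).Nonempty) (hc : ∀ i, IsCompact (A i))
    (G : Finset (Finset (Fin m))) (β : Finset (Fin m) → ℝ)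
    (hfp : IsFractionalPartition m G β)
    (hnontriv : Finset.univ ∉ G)
    (hpos : 0 < volume (∑ i : Fin m, A i))
    (heq : (volume (∑ i : Fin m, A i)).toReal =
      ∑ S ∈ G, β S * (volume (∑ i ∈ S, A i)).toReal) :
    ∀ S ∈ G, volume (∑ i ∈ S, A i) = 0 → ∃ x : ℝ, (∑ i ∈ S, A i) = {x} := by
  classical
  obtain ⟨hGne, hβ01, hcov⟩ := hfp
  have hβpos : ∀ S ∈ G, 0 ≤ β S := fun S hS => (hβ01 S hS).1.le
  intro S₀ hS₀G hvol0
  have hμmem : ∀ i, sInf (A i) ∈ A i := fun i => (hc i).sInf_mem (hne i)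
  have hMmem : ∀ i, sSup (A i) ∈ A i := fun i => (hc i).sSup_mem (hne i)
  have hμle : ∀ i, ∀ y ∈ A i, sInf (A i) ≤ y := fun i y hy => csInf_le (hc i).bddBelow hy
  have hleM : ∀ i, ∀ y ∈ A i, y ≤ sSup (A i) := fun i y hy => le_csSup (hc i).bddAbove hy
  have hPsimin : Psi A G β (fun i => sInf (A i)) = 0 := by
    unfold Psi
    simp [phi_min hc]
  have hPsimax : Psi A G β (fun i => sSup (A i)) = 0 := by
    unfold Psi
    simp only [phi_max hc]
    rw [heq, sub_self]
  have hsing : ∀ i ∈ S₀, A i = {sInf (A i)} := by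
    intro i₀ hi₀S
    by_contra hnsing
    have hμM : sInf (A i₀) ≤ sSup (A i₀) := hleM i₀ _ (hμmem i₀)
    have hlt : sInf (A i₀) < sSup (A i₀) := by
      rcases eq_or_lt_of_le hμM with hEq | h
      · exfalso
        apply hnsing
        apply subset_antisymm
        · intro y hy
          have h1 := hμle i₀ y hy
          have h2 := hleM i₀ y hy
          simp only [Set.mem_singleton_iff]
          rw [← hEq] at h2
          linarith
        · simpa using hμmem i₀
      · exact h
    set l : ℝ := sSup (A i₀) - sInf (A i₀) with hldef
    have hlpos : 0 < l := by simp only [hldef]; linarith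
    set T' : Set ℝ := ∑ j ∈ Finset.univ.erase i₀, A j with hT'def
    have hT'ne : T'.Nonempty := by
      refine ⟨∑ j ∈ Finset.univ.erase i₀, sInf (A j), ?_⟩
      exact Set.finset_sum_mem_finset_sum _ _ _ (fun j _ => hμmem j)
    -- window fact
    have hwin : ∀ c ∈ T',
        volume ((∑ i : Fin m, A i) ∩ Ioc (c + sInf (A i₀)) (c + sSup (A i₀))) = 0 := by
      intro c hcT
      obtain ⟨g, hg, hgsum⟩ := (Set.mem_finset_sum _ A c).1 hcT
      set x : Fin m → ℝ := fun j => if j = i₀ then sInf (A i₀) else g j with hxdef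
      have hxmem : ∀ j, x j ∈ A j := by
        intro j
        by_cases hj : j = i₀
        · subst hj; simp only [hxdef, if_pos rfl]; exact hμmem j
        · simp only [hxdef, if_neg hj]
          exact hg (Finset.mem_erase.2 ⟨hj, Finset.mem_univ j⟩)
      have hxi₀ : x i₀ = sInf (A i₀) := by simp [hxdef]
      have hxc : ∑ j ∈ Finset.univ.erase i₀, x j = c := by
        rw [← hgsum]
        exact Finset.sum_congr rfl (fun j hj => by
          simp only [hxdef, if_neg (Finset.ne_of_mem_erase hj)])
      have h1 : (0:ℝ) ≤ Psi A G β x := by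
        rw [← hPsimin]
        exact psi_interp hc hβpos hcov _ x hμmem hxmem (fun j => hμle j _ (hxmem j))
      have h2 := psi_move_strong hc hβpos hcov x hxmem i₀
        (b := sSup (A i₀)) (by rw [hxi₀]; exact hμM) hS₀G hi₀S hvol0
      have h3 : Psi A G β (Function.update x i₀ (sSup (A i₀))) ≤ 0 := by
        rw [← hPsimax]
        refine psi_interp hc hβpos hcov _ _ (fun j => ?_) hMmem (fun j => ?_)
        · by_cases hj : j = i₀
          · subst hj; simp only [Function.update_self]; exact hMmem j
          · rw [Function.update_of_ne hj]; exact hxmem j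
        · by_cases hj : j = i₀
          · subst hj; simp only [Function.update_self]; exact le_rfl
          · rw [Function.update_of_ne hj]; exact hleM j _ (hxmem j)
      have hβS₀ : 0 < β S₀ := (hβ01 S₀ hS₀G).1
      have hwle : win A Finset.univ x (sSup (A i₀) - x i₀) ≤ 0 := by
        have hmul : β S₀ * win A Finset.univ x (sSup (A i₀) - x i₀) ≤ β S₀ * 0 := by
          rw [mul_zero]; linarith
        exact le_of_mul_le_mul_left hmul hβS₀
      have hw0 : win A Finset.univ x (sSup (A i₀) - x i₀) = 0 :=
        le_antisymm hwle (win_nonneg _ _ _)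
      unfold win at hw0
      have hv : volume ((∑ j : Fin m, A j) ∩
          Ioc (∑ j, x j) ((∑ j, x j) + (sSup (A i₀) - x i₀))) = 0 := by
        rcases (ENNReal.toReal_eq_zero_iff _).1 hw0 with h | h
        · exact h
        · exact absurd h (sum_vol_ne_top hc _ _)
      have hsx : ∑ j, x j = sInf (A i₀) + c := by
        rw [← Finset.add_sum_erase Finset.univ x (Finset.mem_univ i₀), hxi₀, hxc]
      rw [hsx, hxi₀] at hv
      have hIoc : Ioc (sInf (A i₀) + c) (sInf (A i₀) + c + (sSup (A i₀) - sInf (A i₀)))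
          = Ioc (c + sInf (A i₀)) (c + sSup (A i₀)) := by
        congr 1 <;> ring
      rwa [hIoc] at hv
    -- covering argument
    obtain ⟨s, hscount, hsdense⟩ := TopologicalSpace.exists_countable_dense ↥T'
    set D : Set ℝ := Subtype.val '' s with hDdef
    have hDcount : D.Countable := hscount.image _
    have hDsub : D ⊆ T' := by rintro _ ⟨⟨d, hd⟩, _, rfl⟩; exact hd
    have hDnear : ∀ c ∈ T', ∀ ε > (0:ℝ), ∃ d ∈ D, |d - c| < ε := by
      intro c hcT ε hε
      have hcl : (⟨c, hcT⟩ : ↥T') ∈ closure s := hsdense _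
      obtain ⟨d, hds, hdist⟩ := Metric.mem_closure_iff.1 hcl ε hε
      refine ⟨(d : ℝ), ⟨d, hds, rfl⟩, ?_⟩
      rw [Subtype.dist_eq, Real.dist_eq] at hdist
      rwa [abs_sub_comm]
    set U : Set ℝ := ⋃ d ∈ D, Ioo (d + sInf (A i₀)) (d + sSup (A i₀)) with hUdef
    have hUnull : volume ((∑ i : Fin m, A i) ∩ U) = 0 := by
      rw [hUdef, Set.inter_iUnion₂]
      refine (measure_biUnion_null_iff hDcount).2 (fun d hd => ?_)
      exact measure_mono_null (Set.inter_subset_inter_right _ Set.Ioo_subset_Ioc_self)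
        (hwin d (hDsub hd))
    set Eb : Set ℝ := {c | c ∈ T' ∧ T' ∩ Ioo (c - l) c = ∅} with hEbdef
    set Ea : Set ℝ := {c | c ∈ T' ∧ T' ∩ Ioo c (c + l) = ∅} with hEadef
    have hEbc : Eb.Countable := by
      refine countable_of_sep hlpos ?_
      rintro c₁ ⟨hc₁, _⟩ c₂ ⟨_, h₂⟩ hlt12
      by_contra hcon
      push_neg at hcon
      have : c₁ ∈ T' ∩ Ioo (c₂ - l) c₂ := ⟨hc₁, by constructor <;> linarith⟩
      rw [h₂] at this
      exact this
    have hEac : Ea.Countable := by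
      refine countable_of_sep hlpos ?_
      rintro c₁ ⟨_, h₁⟩ c₂ ⟨hc₂, _⟩ hlt12
      by_contra hcon
      push_neg at hcon
      have : c₂ ∈ T' ∩ Ioo c₁ (c₁ + l) := ⟨hc₂, by constructor <;> linarith⟩
      rw [h₁] at this
      exact this
    have hwindow_mem : ∀ c' ∈ T', ∀ t : ℝ,
        c' + sInf (A i₀) < t → t < c' + sSup (A i₀) → t ∈ U := by
      intro c' hc' t ht1 ht2
      obtain ⟨d, hdD, hdist⟩ := hDnear c' hc'
        (min (t - (c' + sInf (A i₀))) ((c' + sSup (A i₀)) - t)) (lt_min (by linarith) (by linarith))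
      have habs := abs_lt.1 hdist
      have hd1 := min_le_left (t - (c' + sInf (A i₀))) ((c' + sSup (A i₀)) - t)
      have hd2 := min_le_right (t - (c' + sInf (A i₀))) ((c' + sSup (A i₀)) - t)
      rw [hUdef]
      exact Set.mem_biUnion hdD ⟨by linarith [habs.1, habs.2], by linarith [habs.1, habs.2]⟩
    have hdecomp : (∑ i : Fin m, A i) = A i₀ + T' := by
      rw [hT'def, ← Finset.add_sum_erase Finset.univ A (Finset.mem_univ i₀)]
    have hcover : (∑ i : Fin m, A i) ⊆
        ((fun c => c + sInf (A i₀)) '' Eb) ∪ ((fun c => c + sSup (A i₀)) '' Ea)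
          ∪ ((∑ i : Fin m, A i) ∩ U) := by
      intro t ht
      have ht' := ht
      rw [hdecomp] at ht'
      obtain ⟨α, hα, c, hcT, rfl⟩ := Set.mem_add.1 ht'
      simp only [Set.mem_union]
      have hαl : sInf (A i₀) ≤ α := hμle i₀ α hα
      have hαu : α ≤ sSup (A i₀) := hleM i₀ α hα
      rcases eq_or_lt_of_le hαl with hEq | hlt1
      · -- α = sInf (A i₀)
        by_cases hEx : (T' ∩ Ioo (c - l) c).Nonempty
        · obtain ⟨c', hc'T, hc'mem⟩ := hEx
          refine Or.inr ⟨ht, hwindow_mem c' hc'T _ ?_ ?_⟩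
          · have := hc'mem.2
            linarith
          · have := hc'mem.1
            simp only [hldef] at this
            linarith
        · exact Or.inl (Or.inl ⟨c, ⟨hcT, Set.not_nonempty_iff_eq_empty.1 hEx⟩, by
            simp only []; rw [← hEq]; ring⟩)
      · rcases eq_or_lt_of_le hαu with hEqu | hlt2
        · -- α = sSup (A i₀)
          by_cases hEx : (T' ∩ Ioo c (c + l)).Nonempty
          · obtain ⟨c', hc'T, hc'mem⟩ := hEx
            refine Or.inr ⟨ht, hwindow_mem c' hc'T _ ?_ ?_⟩
            · have := hc'mem.2
              simp only [hldef] at this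
              linarith
            · have := hc'mem.1
              linarith
          · exact Or.inl (Or.inr ⟨c, ⟨hcT, Set.not_nonempty_iff_eq_empty.1 hEx⟩, by
              simp only []; rw [hEqu]; ring⟩)
        · exact Or.inr ⟨ht, hwindow_mem c hcT _ (by linarith) (by linarith)⟩
    have hzero : volume (∑ i : Fin m, A i) = 0 := by
      refine measure_mono_null hcover ?_
      refine measure_union_null (measure_union_null ?_ ?_) ?_
      · exact (hEbc.image _).measure_zero _
      · exact (hEac.image _).measure_zero _
      · exact hUnull
    exact hpos.ne' hzero
  exact ⟨∑ i ∈ S₀, sInf (A i), sum_singleton_sets S₀ (fun i => sInf (A i)) hsing⟩
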